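/- Let M : H(n) → ℝ^m be an r-complete measurement that is surjective onto ℝ^m and has nontrivial kernel. Let σ_min > 0 be the smallest singular value of M (as a linear map from H(n) with the Hilbert–Schmidt norm to ℝ^m with the Euclidean norm), and let κ := −max{λ_{n−r}(Z) : Z ∈ Ker(M), ‖Z‖₂ = 1}. Then for every ε > 0, every X_r ∈ S_r^n, every Hermitian E with ‖M(E)‖₂ ≤ ε, and every positive semidefinite Hermitian Y with ‖M(Y) − M(X_r + E)‖₂ ≤ ε, one has ‖Y − X_r‖₂ ≤ (2/σ_min)·(1 + 1/κ)·ε. -/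

import Mathlib

open Matrix
open scoped ComplexOrder

noncomputable section

/-- The Frobenius norm `‖X‖₂` of a complex matrix. -/
def frobNorm {n : ℕ} (X : Matrix (Fin n) (Fin n) ℂ) : ℝ :=
  Real.sqrt (∑ i, ∑ j, Complex.normSq (X i j))

/-- The Hilbert–Schmidt inner product `⟨X,Y⟩ = tr(X*Y)` (real part); for Hermitian matrices
this is `tr(XY)`. -/
def hsInner {n : ℕ} (X Y : Matrix (Fin n) (Fin n) ℂ) : ℝ := ((Xᴴ * Y).trace).re

def rComplete {n : ℕ} {ι : Type*} [Fintype ι]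
    (M : Matrix (Fin n) (Fin n) ℂ →ₗ[ℝ] EuclideanSpace ℝ ι) (r : ℕ) : Prop :=
  ∀ X X' : Matrix (Fin n) (Fin n) ℂ, X.PosSemidef → X.rank ≤ r → X'.PosSemidef →
    X ≠ X' → M X ≠ M X'

/-- The eigenvalues of a Hermitian matrix listed in decreasing order (with multiplicity);
`eigenvaluesDesc hZ i` is `λ_{i+1}(Z)` in the paper's (1-based) notation. -/
noncomputable def eigenvaluesDesc {n : ℕ} {Z : Matrix (Fin n) (Fin n) ℂ}
    (hZ : Z.IsHermitian) : Fin n → ℝ :=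
  fun i => hZ.eigenvalues (Tuple.sort hZ.eigenvalues i.rev)

/-!
Write `Y - X_r = W + Z` with `Z` in the Hermitian part of `Ker M` and `W` Hilbert–Schmidt
orthogonal to it. Then `σ_min ‖W‖₂ ≤ ‖M W‖ = ‖M (Y - X_r)‖ ≤ 2ε`. On `Ker X_r`, a subspace of
dimension at least `n - r`, the quadratic form of `Z = Y - X_r - W` is at least `-‖W‖₂ ‖x‖²`
because `Y ⪰ 0`; by the Courant–Fischer principle `λ_{n-r}(Z) ≥ -‖W‖₂`, while the definition of
`κ` gives `λ_{n-r}(Z) ≤ -κ ‖Z‖₂`, so `‖Z‖₂ ≤ ‖W‖₂ / κ`. Finally `κ > 0` by `r`-completeness: if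
`λ_{n-r}(Z) ≥ 0` for some nonzero `Z ∈ Ker M`, then `Z = P - N` with `P, N ⪰ 0`, `rank N ≤ r`
and `M P = M N`.
-/

section CourantFischer
variable {𝕜 E ι : Type*} [RCLike 𝕜] [NormedAddCommGroup E] [InnerProductSpace 𝕜 E] [Fintype ι]

theorem OrthonormalBasis.re_inner_map_self_eq_sum {T : E →ₗ[𝕜] E} (b : OrthonormalBasis ι 𝕜 E)
    {μ : ι → ℝ} (hb : ∀ j, T (b j) = (μ j : 𝕜) • b j) (x : E) :
    RCLike.re (inner 𝕜 (T x) x) = ∑ j, μ j * ‖b.repr x j‖ ^ 2 := by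
  classical
  have hT : ∀ j, b.repr (T x) j = μ j * b.repr x j := by
    intro j
    conv_lhs => rw [← b.sum_repr x]
    simp [hb, b.repr_self, Pi.single_apply, RCLike.real_smul_eq_coe_mul, mul_comm]
  rw [← b.repr.inner_map_map, PiLp.inner_apply, map_sum]
  refine Finset.sum_congr rfl fun j _ => ?_
  simp only [hT, RCLike.inner_apply, map_mul, RCLike.conj_ofReal]
  rw [mul_left_comm, RCLike.mul_conj]
  norm_cast

open Finset in
theorem OrthonormalBasis.le_of_mul_norm_sq_le_re_inner {T : E →ₗ[𝕜] E}
    (b : OrthonormalBasis ι 𝕜 E) {μ : ι → ℝ} (hb : ∀ j, T (b j) = (μ j : 𝕜) • b j)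
    {V : Submodule 𝕜 E} {s t : ℝ} (hV : #{j | s < μ j} < Module.finrank 𝕜 V)
    (h : ∀ x ∈ V, t * ‖x‖ ^ 2 ≤ RCLike.re (inner 𝕜 (T x) x)) : t ≤ s := by
  classical
  have := Module.Finite.of_basis b.toBasis
  let S : Finset ι := {j | s < μ j}
  let coords : V →ₗ[𝕜] S → 𝕜 := LinearMap.pi fun j => (b.toBasis.coord j).comp V.subtype
  have hcoords : Module.finrank 𝕜 (S → 𝕜) < Module.finrank 𝕜 V := by simpa using hV
  -- a nonzero `x ∈ V` with no component along the eigenvectors of eigenvalue `> s`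
  obtain ⟨⟨x, hxV⟩, hx, hx0⟩ := Submodule.exists_mem_ne_zero_of_ne_bot
    (LinearMap.ker_ne_bot_of_finrank_lt hcoords)
  have hxS : ∀ j, s < μ j → b.repr x j = 0 := fun j hj => by
    have hx' : coords ⟨x, hxV⟩ = 0 := hx
    simpa [coords] using congrFun hx' ⟨j, by simpa [S] using hj⟩
  have hpos : 0 < ‖x‖ ^ 2 := by
    have : x ≠ 0 := fun h => hx0 (by simp [h])
    positivity
  have hle : RCLike.re (inner 𝕜 (T x) x) ≤ s * ‖x‖ ^ 2 := by
    rw [b.re_inner_map_self_eq_sum hb, ← b.repr.norm_map, EuclideanSpace.norm_sq_eq, mul_sum]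
    refine sum_le_sum fun j _ => ?_
    by_cases hj : s < μ j
    · simp [hxS j hj]
    · exact mul_le_mul_of_nonneg_right (not_lt.mp hj) (sq_nonneg _)
  exact le_of_mul_le_mul_right ((h x hxV).trans hle) hpos

end CourantFischer

open Finset in
theorem Finset.card_filter_comp_perm {α : Type*} [Fintype α] (σ : Equiv.Perm α) (p : α → Prop)
    [DecidablePred p] : #{a | p (σ a)} = #{a | p a} := by
  conv_rhs => rw [← Finset.map_univ_equiv σ, Finset.filter_map, Finset.card_map]
  rfl

namespace Tuple
open Finset
variable {α : Type*} [LinearOrder α] {n : ℕ}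

theorem card_apply_sort_lt_le (f : Fin n → α) (i : Fin n) :
    #{j | f (sort f i) < f j} ≤ n - 1 - i := by
  rw [← card_filter_comp_perm (sort f), ← Fin.card_Ioi]
  refine card_le_card fun k hk => mem_Ioi.mpr (lt_of_not_ge fun hki => ?_)
  exact (mem_filter.mp hk).2.not_ge (monotone_sort f hki)

theorem card_lt_apply_sort_le (f : Fin n → α) (i : Fin n) :
    #{j | f j < f (sort f i)} ≤ i := by
  rw [← card_filter_comp_perm (sort f), ← Fin.card_Iio]
  refine card_le_card fun k hk => mem_Iio.mpr (lt_of_not_ge fun hik => ?_)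
  exact (mem_filter.mp hk).2.not_ge (monotone_sort f hik)

end Tuple

section HilbertSchmidt
variable {n : ℕ}

def hsEquiv : Matrix (Fin n) (Fin n) ℂ ≃ₗ[ℝ] EuclideanSpace ℂ (Fin n × Fin n) where
  toFun X := WithLp.toLp 2 fun p => X p.1 p.2
  invFun v := Matrix.of fun i j => v (i, j)
  map_add' _ _ := rfl
  map_smul' _ _ := rfl
  left_inv _ := rfl
  right_inv _ := rfl

@[simp]
theorem hsEquiv_apply (X : Matrix (Fin n) (Fin n) ℂ) (p : Fin n × Fin n) :
    hsEquiv X p = X p.1 p.2 :=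
  rfl

theorem norm_hsEquiv (X : Matrix (Fin n) (Fin n) ℂ) : ‖hsEquiv X‖ = frobNorm X := by
  simp [EuclideanSpace.norm_eq, frobNorm, Fintype.sum_prod_type, Complex.normSq_eq_norm_sq]

theorem inner_hsEquiv (X Y : Matrix (Fin n) (Fin n) ℂ) :
    inner ℝ (hsEquiv X) (hsEquiv Y) = hsInner X Y := by
  rw [hsInner, Matrix.trace, PiLp.inner_apply, Fintype.sum_prod_type, Finset.sum_comm]
  simp [Matrix.mul_apply, Complex.inner, mul_comm]

theorem frobNorm_add_le (X Y : Matrix (Fin n) (Fin n) ℂ) :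
    frobNorm (X + Y) ≤ frobNorm X + frobNorm Y := by
  simpa only [← norm_hsEquiv, map_add] using norm_add_le _ _

theorem frobNorm_smul (c : ℝ) (X : Matrix (Fin n) (Fin n) ℂ) :
    frobNorm (c • X) = |c| * frobNorm X := by
  rw [← norm_hsEquiv, map_smul, norm_smul, norm_hsEquiv, Real.norm_eq_abs]

theorem frobNorm_pos {X : Matrix (Fin n) (Fin n) ℂ} (hX : X ≠ 0) : 0 < frobNorm X := by
  rw [← norm_hsEquiv, norm_pos_iff]
  exact hsEquiv.map_ne_zero_iff.mpr hX

theorem frobNorm_inv_smul_self {X : Matrix (Fin n) (Fin n) ℂ} (hX : X ≠ 0) :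
    frobNorm ((frobNorm X)⁻¹ • X) = 1 := by
  have := frobNorm_pos hX
  rw [frobNorm_smul, abs_inv, abs_of_pos this, inv_mul_cancel₀ this.ne']

theorem exists_mem_forall_hsInner_sub_eq_zero (K : Submodule ℝ (Matrix (Fin n) (Fin n) ℂ))
    (A : Matrix (Fin n) (Fin n) ℂ) : ∃ Z ∈ K, ∀ Z' ∈ K, hsInner Z' (A - Z) = 0 := by
  let K' := K.map hsEquiv.toLinearMap
  obtain ⟨Z, hZ, hZA⟩ := Submodule.mem_map.mp (K'.starProjection_apply_mem (hsEquiv A))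
  refine ⟨Z, hZ, fun Z' hZ' => ?_⟩
  have horth := K'.sub_starProjection_mem_orthogonal (hsEquiv A)
  rw [← hZA] at horth
  rw [← inner_hsEquiv, map_sub]
  exact (K'.mem_orthogonal _).mp horth _ (Submodule.mem_map_of_mem hZ')

attribute [local instance] Matrix.frobeniusNormedAddCommGroup in
theorem frobNorm_eq_frobenius_norm (A : Matrix (Fin n) (Fin n) ℂ) : frobNorm A = ‖A‖ := by
  rw [frobNorm, Matrix.frobenius_norm_def, Real.sqrt_eq_rpow]
  simp [Complex.normSq_eq_norm_sq]

attribute [local instance] Matrix.frobeniusNormedAddCommGroup in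
theorem norm_toEuclideanLin_le (A : Matrix (Fin n) (Fin n) ℂ) (x : EuclideanSpace ℂ (Fin n)) :
    ‖toEuclideanLin A x‖ ≤ frobNorm A * ‖x‖ := by
  rw [frobNorm_eq_frobenius_norm, toLpLin_apply, ← Matrix.frobenius_norm_replicateCol (ι := Unit),
    ← Matrix.frobenius_norm_replicateCol (ι := Unit), Matrix.replicateCol_mulVec]
  exact Matrix.frobenius_norm_mul _ _

end HilbertSchmidt

section Eigenvalues
open Finset
variable {n : ℕ}

theorem finrank_ker_toEuclideanLin (A : Matrix (Fin n) (Fin n) ℂ) :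
    Module.finrank ℂ (LinearMap.ker (toEuclideanLin A)) = n - A.rank := by
  have := LinearMap.finrank_range_add_finrank_ker (toEuclideanLin A)
  rw [finrank_euclideanSpace_fin] at this
  rw [Matrix.rank_eq_finrank_range_toLin A (PiLp.basisFun 2 ℂ (Fin n))
    (PiLp.basisFun 2 ℂ (Fin n))]
  exact Nat.eq_sub_of_add_eq' this

theorem Matrix.IsHermitian.toEuclideanLin_eigenvectorBasis {A : Matrix (Fin n) (Fin n) ℂ}
    (hA : A.IsHermitian) (j : Fin n) :
    toEuclideanLin A (hA.eigenvectorBasis j) = (hA.eigenvalues j : ℂ) • hA.eigenvectorBasis j := by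
  rw [toLpLin_apply, hA.mulVec_eigenvectorBasis]
  rfl

theorem card_eigenvaluesDesc_lt_le {A : Matrix (Fin n) (Fin n) ℂ} (hA : A.IsHermitian)
    (i : Fin n) : #{j | eigenvaluesDesc hA i < hA.eigenvalues j} ≤ i := by
  have := Tuple.card_apply_sort_lt_le hA.eigenvalues i.rev
  rw [Fin.val_rev] at this
  exact this.trans (by omega)

theorem card_lt_eigenvaluesDesc_le {A : Matrix (Fin n) (Fin n) ℂ} (hA : A.IsHermitian)
    (i : Fin n) : #{j | hA.eigenvalues j < eigenvaluesDesc hA i} ≤ n - 1 - i := by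
  have := Tuple.card_lt_apply_sort_le hA.eigenvalues i.rev
  rw [Fin.val_rev] at this
  exact this.trans (by omega)

theorem le_eigenvaluesDesc_of_le_re_inner {A : Matrix (Fin n) (Fin n) ℂ} (hA : A.IsHermitian)
    (i : Fin n) {V : Submodule ℂ (EuclideanSpace ℂ (Fin n))} (hV : (i : ℕ) < Module.finrank ℂ V)
    {t : ℝ} (h : ∀ x ∈ V, t * ‖x‖ ^ 2 ≤ (inner ℂ (toEuclideanLin A x) x).re) :
    t ≤ eigenvaluesDesc hA i :=
  hA.eigenvectorBasis.le_of_mul_norm_sq_le_re_inner hA.toEuclideanLin_eigenvectorBasis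
    ((card_eigenvaluesDesc_lt_le hA i).trans_lt hV) h

theorem neg_frobNorm_le_mul_eigenvaluesDesc {r : ℕ} {X Y W Z : Matrix (Fin n) (Fin n) ℂ}
    (hY : Y.PosSemidef) (hX : X.rank ≤ r) {c : ℝ} (hc : 0 < c) (hZ : Z.IsHermitian)
    (hZeq : c • Z = Y - X - W) (i : Fin n) (hi : ↑i + r < n) :
    -frobNorm W ≤ c * eigenvaluesDesc hZ i := by
  have hV : (i : ℕ) < Module.finrank ℂ (LinearMap.ker (toEuclideanLin X)) := by
    rw [finrank_ker_toEuclideanLin]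
    omega
  refine (div_le_iff₀' hc).mp (le_eigenvaluesDesc_of_le_re_inner hZ i hV fun x hx => ?_)
  have hquad : c * (inner ℂ (toEuclideanLin Z x) x).re
      = (inner ℂ (toEuclideanLin Y x) x).re - (inner ℂ (toEuclideanLin W x) x).re := by
    have h := congrArg (fun B => (inner ℂ (toEuclideanLin B x) x).re) hZeq
    simp only [RCLike.real_smul_eq_coe_smul (K := ℂ), map_smul, map_sub, LinearMap.smul_apply,
      LinearMap.sub_apply, LinearMap.mem_ker.mp hx] at h
    simpa [inner_smul_left] using h
  have hY' : 0 ≤ (inner ℂ (toEuclideanLin Y x) x).re :=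
    (isPositive_toEuclideanLin_iff.mpr hY).re_inner_nonneg_left x
  have hW' : (inner ℂ (toEuclideanLin W x) x).re ≤ frobNorm W * ‖x‖ ^ 2 :=
    calc (inner ℂ (toEuclideanLin W x) x).re ≤ ‖toEuclideanLin W x‖ * ‖x‖ :=
        re_inner_le_norm (𝕜 := ℂ) _ _
      _ ≤ frobNorm W * ‖x‖ * ‖x‖ := by gcongr; exact norm_toEuclideanLin_le W x
      _ = frobNorm W * ‖x‖ ^ 2 := by ring
  rw [div_mul_eq_mul_div, div_le_iff₀' hc]
  linarith

theorem Matrix.IsHermitian.exists_posSemidef_sub_eq {Z : Matrix (Fin n) (Fin n) ℂ}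
    (hZ : Z.IsHermitian) :
    ∃ P N : Matrix (Fin n) (Fin n) ℂ, P.PosSemidef ∧ N.PosSemidef ∧
      N.rank = #{j | hZ.eigenvalues j < 0} ∧ Z = P - N := by
  set U : Matrix (Fin n) (Fin n) ℂ := hZ.eigenvectorUnitary.1
  let conj (d : Fin n → ℝ) : Matrix (Fin n) (Fin n) ℂ := U * diagonal (fun j => (d j : ℂ)) * Uᴴ
  have hconj {d : Fin n → ℝ} (hd : 0 ≤ d) : (conj d).PosSemidef :=
    (posSemidef_diagonal_iff.mpr fun j => by exact_mod_cast hd j).mul_mul_conjTranspose_same U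
  refine ⟨conj fun j => max (hZ.eigenvalues j) 0, conj fun j => max (-hZ.eigenvalues j) 0,
    hconj fun j => le_max_right _ _, hconj fun j => le_max_right _ _, ?_, ?_⟩
  · have hU : IsUnit U.det := UnitaryGroup.det_isUnit _
    have hUH : IsUnit Uᴴ.det := by rw [det_conjTranspose]; exact hU.star
    rw [rank_mul_eq_left_of_isUnit_det _ _ hUH, rank_mul_eq_right_of_isUnit_det _ _ hU,
      rank_diagonal, Fintype.card_subtype]
    congr! 2 with j
    simp
  · conv_lhs => rw [hZ.spectral_theorem, Unitary.conjStarAlgAut_apply]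
    simp only [conj, ← Matrix.mul_sub, ← Matrix.sub_mul, diagonal_sub, ← Complex.ofReal_sub,
      max_zero_sub_max_neg_zero_eq_self]
    rfl

theorem eigenvaluesDesc_neg_of_rComplete {ι : Type*} [Fintype ι]
    {M : Matrix (Fin n) (Fin n) ℂ →ₗ[ℝ] EuclideanSpace ℝ ι} {r : ℕ} (hM : rComplete M r)
    {Z : Matrix (Fin n) (Fin n) ℂ} (hZ : Z.IsHermitian) (hMZ : M Z = 0) (hZ0 : Z ≠ 0)
    (i : Fin n) (hi : n ≤ ↑i + r + 1) :
    eigenvaluesDesc hZ i < 0 := by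
  by_contra! h
  obtain ⟨P, N, hP, hN, hNrank, hZPN⟩ := hZ.exists_posSemidef_sub_eq
  have hNr : N.rank ≤ r := calc
    N.rank ≤ #{j | hZ.eigenvalues j < eigenvaluesDesc hZ i} :=
      hNrank ▸ card_le_card (monotone_filter_right _ fun _ _ hj => hj.trans_le h)
    _ ≤ r := (card_lt_eigenvaluesDesc_le hZ i).trans (by omega)
  refine hM N P hN hNr hP (fun hNP => hZ0 (by rw [hZPN, hNP, sub_self])) ?_
  rw [eq_comm, ← sub_eq_zero, ← map_sub, ← hZPN, hMZ]

end Eigenvalues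

section Bounds
variable {n : ℕ}

theorem mul_frobNorm_le_norm_of_forall_hsInner_eq_zero {F : Type*} [SeminormedAddCommGroup F]
    [NormedSpace ℝ F] {M : Matrix (Fin n) (Fin n) ℂ →ₗ[ℝ] F} {σ : ℝ}
    (hσ : ∀ X : Matrix (Fin n) (Fin n) ℂ, X.IsHermitian → frobNorm X = 1 →
      (∀ Z : Matrix (Fin n) (Fin n) ℂ, Z.IsHermitian → M Z = 0 → hsInner Z X = 0) → σ ≤ ‖M X‖)
    {W : Matrix (Fin n) (Fin n) ℂ} (hW : W.IsHermitian)
    (hWorth : ∀ Z : Matrix (Fin n) (Fin n) ℂ, Z.IsHermitian → M Z = 0 → hsInner Z W = 0) :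
    σ * frobNorm W ≤ ‖M W‖ := by
  rcases eq_or_ne W 0 with rfl | hW0
  · simp [frobNorm]
  have hc := frobNorm_pos hW0
  have h := hσ _ (hW.smul (IsSelfAdjoint.all _)) (frobNorm_inv_smul_self hW0) fun Z hZ hMZ => by
    rw [← inner_hsEquiv, map_smul, inner_smul_right, inner_hsEquiv, hWorth Z hZ hMZ, mul_zero]
  rw [map_smul, norm_smul, Real.norm_eq_abs, abs_inv, abs_of_pos hc, inv_mul_eq_div] at h
  exact (le_div_iff₀ hc).mp h

theorem mul_frobNorm_le_frobNorm_of_eigenvaluesDesc_le {F : Type*} [AddCommGroup F] [Module ℝ F]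
    {M : Matrix (Fin n) (Fin n) ℂ →ₗ[ℝ] F} {r : ℕ} {κ : ℝ} (i : Fin n) (hi : ↑i + r < n)
    (hκ : ∀ (Z : Matrix (Fin n) (Fin n) ℂ) (hZ : Z.IsHermitian), M Z = 0 → frobNorm Z = 1 →
      eigenvaluesDesc hZ i ≤ -κ)
    {X Y W Z : Matrix (Fin n) (Fin n) ℂ} (hY : Y.PosSemidef) (hX : X.rank ≤ r)
    (hZ : Z.IsHermitian) (hMZ : M Z = 0) (hZeq : Z = Y - X - W) :
    κ * frobNorm Z ≤ frobNorm W := by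
  rcases eq_or_ne Z 0 with rfl | hZ0
  · simp [frobNorm]
  have hc := frobNorm_pos hZ0
  have hZu : ((frobNorm Z)⁻¹ • Z).IsHermitian := hZ.smul (IsSelfAdjoint.all _)
  have hlow := neg_frobNorm_le_mul_eigenvaluesDesc hY hX hc hZu
    (by rw [smul_inv_smul₀ hc.ne', hZeq]) i hi
  have hup := hκ _ hZu (by rw [map_smul, hMZ, smul_zero]) (frobNorm_inv_smul_self hZ0)
  nlinarith

end Bounds

/-- explicit stability bound.  Let `M` be `r`-complete, surjective onto `ℝ^m`
(on Hermitian matrices) with nontrivial kernel, let `σ_min > 0` be its smallest singular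
value, i.e. the least value of `‖M X‖` over Hermitian unit-norm `X` that are
Hilbert–Schmidt-orthogonal to the kernel of `M` in `H(n)`, and let
`κ := −max{λ_{n−r}(Z) : Z ∈ Ker M Hermitian, ‖Z‖₂ = 1}`.  Then for all `ε > 0`,
`X_r ∈ S_r^n`, Hermitian `E` with `‖M E‖₂ ≤ ε` and PSD `Y` with `‖M Y − M(X_r+E)‖₂ ≤ ε`,
one has `‖Y − X_r‖₂ ≤ (2/σ_min)(1 + 1/κ)·ε`. -/
theorem stmt13 {n m r : ℕ} (hrn : r < n)
    (M : Matrix (Fin n) (Fin n) ℂ →ₗ[ℝ] EuclideanSpace ℝ (Fin m))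
    (hM : rComplete M r)
    (σmin : ℝ) (hσpos : 0 < σmin)
    (hσ : IsLeast {s : ℝ | ∃ X : Matrix (Fin n) (Fin n) ℂ, X.IsHermitian ∧
        frobNorm X = 1 ∧
        (∀ Z : Matrix (Fin n) (Fin n) ℂ, Z.IsHermitian → M Z = 0 → hsInner Z X = 0) ∧
        s = ‖M X‖} σmin)
    (κ : ℝ)
    (hκ : IsGreatest {t : ℝ | ∃ (Z : Matrix (Fin n) (Fin n) ℂ) (hZ : Z.IsHermitian),
        M Z = 0 ∧ frobNorm Z = 1 ∧ t = eigenvaluesDesc hZ ⟨n - r - 1, by omega⟩} (-κ)) :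
    ∀ ε > (0 : ℝ),
      ∀ Xr : Matrix (Fin n) (Fin n) ℂ, Xr.PosSemidef → Xr.rank ≤ r →
      ∀ E : Matrix (Fin n) (Fin n) ℂ, E.IsHermitian → ‖M E‖ ≤ ε →
      ∀ Y : Matrix (Fin n) (Fin n) ℂ, Y.PosSemidef → ‖M Y - M (Xr + E)‖ ≤ ε →
        frobNorm (Y - Xr) ≤ (2 / σmin) * (1 + 1 / κ) * ε := by
  intro ε _ Xr hXr hXrk E _ hME Y hY hMY
  let i : Fin n := ⟨n - r - 1, by omega⟩
  have hi : (i : ℕ) + r + 1 = n := by simp only [i]; omega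
  have hκpos : 0 < κ := by
    obtain ⟨Z, hZ, hMZ, hZ1, hκZ⟩ := hκ.1
    have hZ0 : Z ≠ 0 := by rintro rfl; simp [frobNorm] at hZ1
    linarith [eigenvaluesDesc_neg_of_rComplete hM hZ hMZ hZ0 i hi.ge]
  obtain ⟨Z, ⟨hMZ : M Z = 0, hZ : Z.IsHermitian⟩, hZorth⟩ :=
    exists_mem_forall_hsInner_sub_eq_zero (LinearMap.ker M ⊓ selfAdjoint.submodule ℝ _) (Y - Xr)
  set W := Y - Xr - Z
  have hMW : ‖M W‖ ≤ 2 * ε := by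
    have : M W = (M Y - M (Xr + E)) + M E := by simp only [W, map_sub, map_add, hMZ]; abel
    linarith [this ▸ norm_add_le (M Y - M (Xr + E)) (M E)]
  have hσW : σmin * frobNorm W ≤ ‖M W‖ :=
    mul_frobNorm_le_norm_of_forall_hsInner_eq_zero
      (fun X hX hX1 hXorth => hσ.2 ⟨X, hX, hX1, hXorth, rfl⟩) ((hY.1.sub hXr.1).sub hZ)
      fun Z' hZ' hMZ' => hZorth Z' ⟨hMZ', hZ'⟩
  have hκZ : κ * frobNorm Z ≤ frobNorm W :=
    mul_frobNorm_le_frobNorm_of_eigenvaluesDesc_le i (by omega)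
      (fun Z' hZ' hMZ' hZ'1 => hκ.2 ⟨Z', hZ', hMZ', hZ'1, rfl⟩) hY hXrk hZ hMZ (by simp [W])
  have hWε : frobNorm W ≤ 2 / σmin * ε := by
    rw [div_mul_eq_mul_div, le_div_iff₀ hσpos]; linarith
  have hZW : frobNorm Z ≤ frobNorm W / κ := by
    rw [le_div_iff₀ hκpos]; linarith
  calc frobNorm (Y - Xr) ≤ frobNorm W + frobNorm Z := by simpa [W] using frobNorm_add_le W Z
    _ ≤ frobNorm W * (1 + 1 / κ) := by rw [mul_one_add, mul_one_div]; linarith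
    _ ≤ 2 / σmin * (1 + 1 / κ) * ε := by rw [mul_right_comm]; gcongr
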